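/- For a random walk with exchangeable increments, E[max_{0<=k<=n} S_k] = sum_{k=1}^n E[S_k^+]/k and E[min_{0<=k<=n} S_k] = - sum_{k=1}^n E[S_k^-]/k, where S_k^+ = max(S_k,0) and S_k^- = -min(S_k,0). -/

import Mathlib

/-!
Let `M_r = max_{0 ≤ k ≤ r} S_k`. For a fixed sequence `y`, summing `M_{m+1} - M_m` over the
`m + 1` cyclic rotations of `(y_0, …, y_m)` gives exactly `(y_0 + ⋯ + y_m)⁺`. Indeed, with `Z` the
partial sums of the periodic extension of `y` and `W_j` the maximum of `Z` over the window
`[j, j + m]`, rotation `j` contributes `max (W_j, Z_{j+m+1}) - W_j`. This vanishes for every `j`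
when `Z_{m+1} ≤ 0`, and otherwise equals `W_{j+1} - W_j`, which telescopes to `Z_{m+1}`.
Exchangeability gives all rotations the same law, so `E[M_{m+1}] - E[M_m] = E[S_{m+1}⁺] / (m + 1)`.
The minimum is minus the maximum of the walk with increments `-X`.
-/

open MeasureTheory Finset

theorem Finset.inf'_eq_neg_sup'_neg {ι α : Type*} [AddCommGroup α] [LinearOrder α]
    [IsOrderedAddMonoid α] {s : Finset ι} (hs : s.Nonempty) (f : ι → α) :
    s.inf' hs f = -s.sup' hs fun i => -f i :=
  le_antisymm (le_neg.mpr (sup'_le _ _ fun _ hi => neg_le_neg (inf'_le f hi)))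
    (le_inf' _ _ fun _ hi => neg_le.mpr (le_sup' (fun i => -f i) hi))

theorem partialSups_congr {α ι : Type*} [SemilatticeSup α] [Preorder ι] [LocallyFiniteOrderBot ι]
    {f g : ι → α} {n : ι} (h : ∀ k ≤ n, f k = g k) : partialSups f n = partialSups g n := by
  simp only [partialSups_apply]
  exact sup'_congr _ rfl fun k hk => h k (mem_Iic.mp hk)

namespace Spitzer

theorem sum_partialSups_shift_succ_sub (Z : ℕ → ℝ) (m : ℕ)
    (hZ : ∀ j, Z (j + (m + 1)) = Z j + Z (m + 1)) :
    ∑ j ∈ range (m + 1),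
        (partialSups (fun k => Z (j + k)) (m + 1) - partialSups (fun k => Z (j + k)) m)
      = max (Z (m + 1)) 0 := by
  set W : ℕ → ℝ := fun j => partialSups (fun k => Z (j + k)) m with hW
  have hlast (j : ℕ) : partialSups (fun k => Z (j + k)) (m + 1) = max (W j) (Z (j + (m + 1))) :=
    partialSups_add_one _ _
  have hfirst (j : ℕ) : partialSups (fun k => Z (j + k)) (m + 1) = max (Z j) (W (j + 1)) := by
    have hshift : (fun k => Z (j + k)) ∘ (fun k => k + 1) = fun k => Z (j + 1 + k) := by
      ext k
      simp only [Function.comp_apply, add_assoc, add_comm 1]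
    rw [partialSups_add_one', hshift, bot_eq_zero, add_zero]
  rcases le_or_gt (Z (m + 1)) 0 with hneg | hpos
  · refine (sum_eq_zero fun j _ => ?_).trans (max_eq_right hneg).symm
    rw [hlast, max_eq_left, sub_self]
    calc Z (j + (m + 1)) = Z j + Z (m + 1) := hZ j
      _ ≤ Z (j + 0) := by simpa using hneg
      _ ≤ W j := le_partialSups_of_le (fun k => Z (j + k)) (Nat.zero_le m)
  · -- now `Z j < Z (j + m + 1)`, so `Z j` is never needed for the maximum over `[j, j + m + 1]`
    have hstep (j : ℕ) : partialSups (fun k => Z (j + k)) (m + 1) = W (j + 1) := by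
      rw [hfirst, max_eq_right]
      calc Z j ≤ Z (j + (m + 1)) := by rw [hZ]; linarith
        _ = Z (j + 1 + m) := by rw [add_comm m, add_assoc]
        _ ≤ W (j + 1) := le_partialSups (fun k => Z (j + 1 + k)) m
    have hperiod : W (m + 1) = W 0 + Z (m + 1) := by
      simp only [hW, ← partialSups_add_const, zero_add]
      congr 2
      ext k
      rw [add_comm, hZ]
    rw [sum_congr rfl fun j _ => by rw [hstep j], sum_range_sub W, hperiod, max_eq_left hpos.le]
    ring

noncomputable def maxPartialSum (r : ℕ) (y : ℕ → ℝ) : ℝ :=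
  partialSups (fun k => ∑ i ∈ range k, y i) r

open Fin.NatCast in
noncomputable def cyclicShift (N : ℕ) [NeZero N] (j : ℕ) : Equiv.Perm ℕ :=
  (Equiv.addRight (j : Fin N)).extendDomain Fin.equivSubtype

theorem cyclicShift_apply_of_lt {N : ℕ} [NeZero N] (j : ℕ) {i : ℕ} (hi : i < N) :
    cyclicShift N j i = (i + j) % N := by
  rw [cyclicShift, Equiv.Perm.extendDomain_apply_subtype _ Fin.equivSubtype hi]
  simp [Fin.equivSubtype, Fin.val_add, Fin.val_natCast]

theorem cyclicShift_apply_of_le {N : ℕ} [NeZero N] (j : ℕ) {i : ℕ} (hi : N ≤ i) :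
    cyclicShift N j i = i :=
  Equiv.Perm.extendDomain_apply_not_subtype _ Fin.equivSubtype hi.not_gt

theorem maxPartialSum_comp_cyclicShift (N : ℕ) [NeZero N] (y : ℕ → ℝ) (j : ℕ) {r : ℕ}
    (hr : r ≤ N) :
    maxPartialSum r (fun i => y (cyclicShift N j i))
      = partialSups (fun k => ∑ i ∈ range (j + k), y (i % N)) r
        - ∑ i ∈ range j, y (i % N) := by
  rw [maxPartialSum, sub_eq_add_neg, ← partialSups_add_const]
  refine partialSups_congr fun k hk => ?_
  rw [← sub_eq_add_neg, sum_range_add_sub_sum_range]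
  refine sum_congr rfl fun i hi => ?_
  rw [cyclicShift_apply_of_lt j ((mem_range.mp hi).trans_le (hk.trans hr)), add_comm]

theorem sum_maxPartialSum_cyclicShift_succ_sub (m : ℕ) (y : ℕ → ℝ) :
    ∑ j ∈ range (m + 1), (maxPartialSum (m + 1) (fun i => y (cyclicShift (m + 1) j i))
        - maxPartialSum m (fun i => y (cyclicShift (m + 1) j i)))
      = max (∑ i ∈ range (m + 1), y i) 0 := by
  set Z : ℕ → ℝ := fun k => ∑ i ∈ range k, y (i % (m + 1))
  have hZ (j : ℕ) : Z (j + (m + 1)) = Z j + Z (m + 1) := by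
    simp only [Z, add_comm j, sum_range_add, Nat.add_mod_left, add_comm (Z j)]
  have hZN : Z (m + 1) = ∑ i ∈ range (m + 1), y i :=
    sum_congr rfl fun i hi => by rw [Nat.mod_eq_of_lt (mem_range.mp hi)]
  simp only [maxPartialSum_comp_cyclicShift (m + 1) y _ le_rfl,
    maxPartialSum_comp_cyclicShift (m + 1) y _ (Nat.le_succ m), sub_sub_sub_cancel_right]
  rw [sum_partialSups_shift_succ_sub Z m hZ, hZN]

theorem measurable_maxPartialSum (r : ℕ) : Measurable (maxPartialSum r) := by
  have hsup' : maxPartialSum r = fun y => (range (r + 1)).sup' nonempty_range_add_one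
      fun k => ∑ i ∈ range k, y i := funext fun y => partialSups_eq_sup'_range _ _
  rw [hsup']
  exact measurable_range_sup'' fun k _ => measurable_sum _ fun i _ => measurable_pi_apply i

theorem integrable_maxPartialSum {Ω : Type*} [MeasurableSpace Ω] {P : Measure Ω}
    {X : ℕ → Ω → ℝ} (hX : ∀ i, Integrable (X i) P) (r : ℕ) :
    Integrable (fun ω => maxPartialSum r (fun i => X i ω)) P := by
  induction r with
  | zero => simp [maxPartialSum]
  | succ r ih =>
    simp only [maxPartialSum, partialSups_add_one] at ih ⊢
    exact ih.sup (integrable_finsetSum _ fun i _ => hX i)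

section Exchangeable

variable {Ω β : Type*} [MeasurableSpace Ω] [MeasurableSpace β]

def ExchangeableUpTo (P : Measure Ω) (n : ℕ) (X : ℕ → Ω → β) : Prop :=
  ∀ σ : Equiv.Perm ℕ, (∀ i, n ≤ i → σ i = i) →
    Measure.map (fun ω i => X (σ i) ω) P = Measure.map (fun ω i => X i ω) P

variable {P : Measure Ω} {n : ℕ} {X : ℕ → Ω → β}

theorem ExchangeableUpTo.mono (hX : ExchangeableUpTo P n X) {m : ℕ} (hmn : m ≤ n) :
    ExchangeableUpTo P m X :=
  fun σ hσ => hX σ fun i hi => hσ i (hmn.trans hi)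

theorem ExchangeableUpTo.comp (hX : ExchangeableUpTo P n X) (hXm : ∀ i, AEMeasurable (X i) P)
    {γ : Type*} [MeasurableSpace γ] {φ : β → γ} (hφ : Measurable φ) :
    ExchangeableUpTo P n (fun i ω => φ (X i ω)) := by
  intro σ hσ
  set Φ : (ℕ → β) → ℕ → γ := fun x i => φ (x i)
  change Measure.map (Φ ∘ fun ω i => X (σ i) ω) P = Measure.map (Φ ∘ fun ω i => X i ω) P
  have hΦ : Measurable Φ := by fun_prop
  have hXσ : AEMeasurable (fun ω i => X (σ i) ω) P := aemeasurable_pi_lambda _ fun i => hXm (σ i)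
  have hX' : AEMeasurable (fun ω i => X i ω) P := aemeasurable_pi_lambda _ hXm
  rw [← AEMeasurable.map_map_of_aemeasurable hΦ.aemeasurable hXσ, hX σ hσ,
    AEMeasurable.map_map_of_aemeasurable hΦ.aemeasurable hX']

theorem ExchangeableUpTo.integral_comp (hX : ExchangeableUpTo P n X)
    (hXm : ∀ i, AEMeasurable (X i) P) {σ : Equiv.Perm ℕ} (hσ : ∀ i, n ≤ i → σ i = i)
    {g : (ℕ → β) → ℝ} (hg : Measurable g) :
    ∫ ω, g (fun i => X (σ i) ω) ∂P = ∫ ω, g (fun i => X i ω) ∂P := by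
  rw [← integral_map (aemeasurable_pi_lambda _ fun i => hXm (σ i)) hg.aestronglyMeasurable,
    hX σ hσ, integral_map (aemeasurable_pi_lambda _ hXm) hg.aestronglyMeasurable]

end Exchangeable

theorem integral_maxPartialSum_succ {Ω : Type*} [MeasurableSpace Ω] {P : Measure Ω} {m : ℕ}
    {X : ℕ → Ω → ℝ} (hX : ExchangeableUpTo P (m + 1) X) (hint : ∀ i, Integrable (X i) P) :
    ∫ ω, maxPartialSum (m + 1) (fun i => X i ω) ∂P
      = ∫ ω, maxPartialSum m (fun i => X i ω) ∂P
        + (∫ ω, max (∑ i ∈ range (m + 1), X i ω) 0 ∂P) / (m + 1) := by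
  set D : (ℕ → ℝ) → ℝ := fun y => maxPartialSum (m + 1) y - maxPartialSum m y
  have hD : Measurable D := (measurable_maxPartialSum _).sub (measurable_maxPartialSum _)
  have hDint (σ : Equiv.Perm ℕ) : Integrable (fun ω => D fun i => X (σ i) ω) P :=
    (integrable_maxPartialSum (fun i => hint (σ i)) _).sub
      (integrable_maxPartialSum (fun i => hint (σ i)) _)
  have hcycle : ∫ ω, max (∑ i ∈ range (m + 1), X i ω) 0 ∂P
      = (m + 1) * ∫ ω, D fun i => X i ω ∂P := calc
    _ = ∫ ω, ∑ j ∈ range (m + 1), D (fun i => X (cyclicShift (m + 1) j i) ω) ∂P :=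
      integral_congr_ae <| ae_of_all _ fun ω =>
        (sum_maxPartialSum_cyclicShift_succ_sub m fun i => X i ω).symm
    _ = ∑ j ∈ range (m + 1), ∫ ω, D (fun i => X (cyclicShift (m + 1) j i) ω) ∂P :=
      integral_finsetSum _ fun j _ => hDint _
    _ = ∑ j ∈ range (m + 1), ∫ ω, D (fun i => X i ω) ∂P :=
      sum_congr rfl fun j _ => hX.integral_comp (fun i => (hint i).aemeasurable)
        (fun _ hi => cyclicShift_apply_of_le j hi) hD
    _ = (m + 1) * ∫ ω, D fun i => X i ω ∂P := by simp
  have hDX : ∫ ω, D (fun i => X i ω) ∂P = ∫ ω, maxPartialSum (m + 1) (fun i => X i ω) ∂P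
      - ∫ ω, maxPartialSum m (fun i => X i ω) ∂P :=
    integral_sub (integrable_maxPartialSum hint _) (integrable_maxPartialSum hint _)
  rw [hcycle, hDX]
  field_simp
  ring

theorem integral_maxPartialSum {Ω : Type*} [MeasurableSpace Ω] {P : Measure Ω} {n : ℕ}
    {X : ℕ → Ω → ℝ} (hX : ExchangeableUpTo P n X) (hint : ∀ i, Integrable (X i) P) :
    ∫ ω, maxPartialSum n (fun i => X i ω) ∂P
      = ∑ k ∈ Icc 1 n, (∫ ω, max (∑ i ∈ range k, X i ω) 0 ∂P) / k := by
  induction n with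
  | zero => simp [maxPartialSum]
  | succ m ih =>
    rw [integral_maxPartialSum_succ hX hint, ih (hX.mono m.le_succ), sum_Icc_succ_top (by omega)]
    push_cast
    rfl

end Spitzer

open Spitzer

theorem spitzer_exchangeable
    {Ω : Type*} [MeasurableSpace Ω] (P : Measure Ω)
    (n : ℕ) (X : ℕ → Ω → ℝ)
    (hexch : ∀ σ : Equiv.Perm ℕ, (∀ i, n ≤ i → σ i = i) →
      Measure.map (fun ω => fun i : ℕ => X (σ i) ω) P
        = Measure.map (fun ω => fun i : ℕ => X i ω) P)
    (hint : ∀ i, Integrable (X i) P)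
    (S : ℕ → Ω → ℝ) (hS : ∀ m ω, S m ω = ∑ i ∈ Finset.range m, X i ω) :
    (∫ ω, (Finset.range (n + 1)).sup' Finset.nonempty_range_add_one (fun k => S k ω) ∂P
        = ∑ k ∈ Finset.Icc 1 n, (∫ ω, max (S k ω) 0 ∂P) / k) ∧
      (∫ ω, (Finset.range (n + 1)).inf' Finset.nonempty_range_add_one (fun k => S k ω) ∂P
        = -∑ k ∈ Finset.Icc 1 n, (∫ ω, -(min (S k ω) 0) ∂P) / k) := by
  obtain rfl : S = fun m ω => ∑ i ∈ range m, X i ω := funext₂ hS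
  have hX : ExchangeableUpTo P n X := hexch
  have hnegX : ExchangeableUpTo P n fun i ω => -X i ω :=
    hX.comp (fun i => (hint i).aemeasurable) measurable_neg
  constructor
  · rw [← integral_maxPartialSum hX hint]
    simp only [maxPartialSum, partialSups_eq_sup'_range]
  · calc _ = -∫ ω, maxPartialSum n (fun i => -X i ω) ∂P := by
          rw [← integral_neg]
          simp only [maxPartialSum, partialSups_eq_sup'_range, inf'_eq_neg_sup'_neg,
            sum_neg_distrib]
      _ = _ := by
          rw [integral_maxPartialSum hnegX fun i => (hint i).neg]
          congr! 4 with k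
          ext ω
          rw [sum_neg_distrib, ← max_neg_neg, neg_zero]
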